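/- (Theorem 2, emergence of spin) Define the average angular momentum over one period by σ := (1/16)·Σ_{n=4q}^{4q+3} Σ_{j=1}^{4} r^j_n ∧ p^j_n. Then, with r̃ := (1/4)·Σ_{n=4q}^{4q+3} r̃_n, one has σ = m·(r̃ ∧ ṽ) − ℏ/2 when s = s⁺, and σ = m·(r̃ ∧ ṽ) + ℏ/2 when s = s⁻. Thus the extended particle has intrinsic angular momentum s_z = −ℏ/2 for s⁺ and s_z = +ℏ/2 for s⁻, for every ε > 0. -/

import Mathlib

/-!
Write the vertices as centre plus displacement, `r^j_n = r̃_n + δ^j_n` with `Σ_j δ^j_n = 0`.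
Because `p^j_n` is a difference quotient of `r^j_n`, the cross terms cancel in
`Σ_j r^j_n ∧ p^j_n`, leaving the orbital part `(4m/ε) r̃_n ∧ r̃_{n+1} = 4m r̃_n ∧ ṽ` and the internal
part `(m/ε) Σ_j δ^j_n ∧ δ^j_{n+1}`. For `δ^j_n = c (sⁿu^j − u^j)` the internal part is `(m/ε) c²`
times the constant `Σ_j u^j ∧ s u^j = ∓8` plus differences `g n − g (n+1)` of
`g n = Σ_j u^j ∧ sⁿu^j`, which telescope to zero over a period because `s⁴ = 1`.
With `c² = ℏε/(4m)` one period contributes `4 · (ℏ/4) · (∓8) = ∓8ℏ`, i.e. `∓ℏ/2` on average.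
-/

noncomputable section

open Finset

/-- The four vertices of the unit square in `ℝ²`. -/
def uR : Fin 4 → EuclideanSpace ℝ (Fin 2) :=
  ![(WithLp.equiv 2 (Fin 2 → ℝ)).symm ![1, 1],
    (WithLp.equiv 2 (Fin 2 → ℝ)).symm ![1, -1],
    (WithLp.equiv 2 (Fin 2 → ℝ)).symm ![-1, -1],
    (WithLp.equiv 2 (Fin 2 → ℝ)).symm ![-1, 1]]

/-- `sPlusIter n j = (s⁺)ⁿ u^j` for the cyclic permutation `s⁺` with
`s⁺u¹ = u², s⁺u² = u³, s⁺u³ = u⁴, s⁺u⁴ = u¹`. -/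
def sPlusIter (n : ℕ) (j : Fin 4) : EuclideanSpace ℝ (Fin 2) := uR (j + Fin.ofNat 4 n)

/-- `sMinusIter n j = (s⁻)ⁿ u^j` for the inverse permutation `s⁻`. -/
def sMinusIter (n : ℕ) (j : Fin 4) : EuclideanSpace ℝ (Fin 2) := uR (j - Fin.ofNat 4 n)

/-- Planar wedge product `a ∧ b = a_x b_y − a_y b_x`. -/
def wedge (a b : EuclideanSpace ℝ (Fin 2)) : ℝ := a 0 * b 1 - a 1 * b 0

local notation "ℝ²" => EuclideanSpace ℝ (Fin 2)

def wedgeBilin : ℝ² →ₗ[ℝ] ℝ² →ₗ[ℝ] ℝ :=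
  LinearMap.mk₂ ℝ wedge
    (fun a b c => by simp only [wedge, PiLp.add_apply]; ring)
    (fun t a b => by simp only [wedge, PiLp.smul_apply, smul_eq_mul]; ring)
    (fun a b c => by simp only [wedge, PiLp.add_apply]; ring)
    (fun t a b => by simp only [wedge, PiLp.smul_apply, smul_eq_mul]; ring)

theorem wedgeBilin_apply (a b : ℝ²) : wedgeBilin a b = wedge a b := rfl

theorem wedge_smul_left (t : ℝ) (a b : ℝ²) : wedge (t • a) b = t * wedge a b :=
  wedgeBilin.map_smul₂ t a b

theorem wedge_smul_right (t : ℝ) (a b : ℝ²) : wedge a (t • b) = t * wedge a b :=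
  (wedgeBilin a).map_smul t b

theorem wedge_sum_left {ι : Type*} (s : Finset ι) (f : ι → ℝ²) (b : ℝ²) :
    wedge (∑ i ∈ s, f i) b = ∑ i ∈ s, wedge (f i) b :=
  map_sum (wedgeBilin.flip b) f s

theorem wedge_sum_right {ι : Type*} (s : Finset ι) (a : ℝ²) (f : ι → ℝ²) :
    wedge a (∑ i ∈ s, f i) = ∑ i ∈ s, wedge a (f i) :=
  map_sum (wedgeBilin a) f s

theorem sum_wedge_momentum_eq_orbital_add_internal {ι : Type*} [Fintype ι]
    (R : ℕ → ℝ²) (δ : ι → ℕ → ℝ²) (hδ : ∀ n, ∑ j, δ j n = 0) (μ : ℝ) (n : ℕ) :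
    ∑ j, wedge (R n + δ j n) (μ • (R (n + 1) + δ j (n + 1) - (R n + δ j n)))
      = μ * (Fintype.card ι * wedge (R n) (R (n + 1)) + ∑ j, wedge (δ j n) (δ j (n + 1))) := by
  have expand : ∀ x x' y y' : ℝ², wedge (x + y) (μ • (x' + y' - (x + y)))
      = μ * (wedge x x' + wedge y y' + wedge x (y' - y) + wedge y (x' - x)) := by
    intro x x' y y'
    simp only [wedge, PiLp.add_apply, PiLp.sub_apply, PiLp.smul_apply, smul_eq_mul]
    ring
  simp only [expand, ← mul_sum, sum_add_distrib, ← wedge_sum_right, ← wedge_sum_left,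
    sum_sub_distrib, hδ, sum_const, card_univ, sub_self]
  simp only [wedge, PiLp.zero_apply, nsmul_eq_mul]
  ring

theorem wedge_add_smul_right (a v : ℝ²) (t : ℝ) : wedge a (a + t • v) = t * wedge a v := by
  simp only [wedge, PiLp.add_apply, PiLp.smul_apply, smul_eq_mul]
  ring

section CyclicShift

variable {G : Type*} [AddGroup G] [Fintype G]

theorem sum_sub_comp_add_right (u : G → ℝ²) (b : G) : ∑ j, (u (j + b) - u j) = 0 := by
  rw [sum_sub_distrib, sub_eq_zero]
  exact Fintype.sum_equiv (Equiv.addRight b) _ _ fun _ => rfl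

theorem sum_wedge_comp_add_right {u : G → ℝ²} {a : G} {w : ℝ}
    (hw : ∀ i, wedge (u i) (u (i + a)) = w) (b : G) :
    ∑ j, wedge (u (j + b)) (u (j + b + a)) = Fintype.card G * w := by
  calc ∑ j, wedge (u (j + b)) (u (j + b + a)) = ∑ i, wedge (u i) (u (i + a)) :=
        Equiv.sum_comp (Equiv.addRight b) fun i => wedge (u i) (u (i + a))
    _ = Fintype.card G * w := by simp [hw]

theorem sum_range_sum_wedge_sub_shift {u : G → ℝ²} {a : G} {w : ℝ}
    (hw : ∀ i, wedge (u i) (u (i + a)) = w) {N : ℕ} (hN : N • a = 0) (n₀ : ℕ) :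
    ∑ k ∈ range N, ∑ j, wedge (u (j + (n₀ + k) • a) - u j) (u (j + (n₀ + k + 1) • a) - u j)
      = N * (Fintype.card G * w) := by
  set g : ℕ → ℝ := fun n => ∑ j, wedge (u j) (u (j + n • a))
  have split (n : ℕ) : ∑ j, wedge (u (j + n • a) - u j) (u (j + (n + 1) • a) - u j)
      = Fintype.card G * w + (g n - g (n + 1)) := by
    have expand : ∀ x y z : ℝ², wedge (x - z) (y - z) = wedge x y + (wedge z x - wedge z y) := by
      intro x y z
      simp only [wedge, PiLp.sub_apply]
      ring
    simp only [expand, sum_add_distrib, sum_sub_distrib, succ_nsmul, ← add_assoc,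
      sum_wedge_comp_add_right hw, g]
  have periodic : g (n₀ + N) = g n₀ := by simp only [g, add_nsmul, hN, add_zero]
  simp only [split, sum_add_distrib, sum_const, card_range, nsmul_eq_mul]
  have telescope := sum_range_sub' (fun k => g (n₀ + k)) N
  simp only [add_zero, ← add_assoc, periodic, sub_self] at telescope
  rw [telescope, add_zero]

theorem sum_range_angularMomentum_of_shift {u : G → ℝ²} {a : G} {w : ℝ}
    (hw : ∀ i, wedge (u i) (u (i + a)) = w) {N : ℕ} (hN : N • a = 0)
    {m ε c : ℝ} (hε : ε ≠ 0) {rt : ℕ → ℝ²} {vt : ℝ²} (hrt : ∀ n, rt (n + 1) = rt n + ε • vt)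
    {r p : G → ℕ → ℝ²} (hr : ∀ j n, r j n = rt n + c • (u (j + n • a) - u j))
    (hp : ∀ j n, p j n = (m / ε) • (r j (n + 1) - r j n)) (n₀ : ℕ) :
    ∑ k ∈ range N, ∑ j, wedge (r j (n₀ + k)) (p j (n₀ + k))
      = Fintype.card G * (m * wedge (∑ k ∈ range N, rt (n₀ + k)) vt + N * (m / ε * c ^ 2) * w) := by
  have center (n : ℕ) : ∑ j, c • (u (j + n • a) - u j) = 0 := by
    rw [← smul_sum, sum_sub_comp_add_right, smul_zero]
  have orbital (n : ℕ) : wedge (rt n) (rt (n + 1)) = ε * wedge (rt n) vt := by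
    rw [hrt, wedge_add_smul_right]
  have internal (n : ℕ) :
      ∑ j, wedge (c • (u (j + n • a) - u j)) (c • (u (j + (n + 1) • a) - u j))
        = c ^ 2 * ∑ j, wedge (u (j + n • a) - u j) (u (j + (n + 1) • a) - u j) := by
    simp only [wedge_smul_left, wedge_smul_right, mul_sum, ← mul_assoc, sq]
  simp only [hp, hr, sum_wedge_momentum_eq_orbital_add_internal rt _ center, orbital, internal]
  simp only [mul_add, sum_add_distrib, ← mul_sum, sum_range_sum_wedge_sub_shift hw hN,
    wedge_sum_left]
  field_simp

end CyclicShift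

theorem Fin.ofNat_eq_nsmul_one {N : ℕ} [NeZero N] (n : ℕ) : Fin.ofNat N n = n • (1 : Fin N) := by
  induction n with
  | zero => ext; simp
  | succ k ih =>
    rw [succ_nsmul, ← ih]
    ext
    simp [Fin.val_add, Nat.add_mod]

theorem uR_wedge_add_one (i : Fin 4) : wedge (uR i) (uR (i + 1)) = -2 := by
  fin_cases i <;> simp [uR, wedge] <;> norm_num

theorem uR_wedge_add_neg_one (i : Fin 4) : wedge (uR i) (uR (i + -1)) = 2 := by
  fin_cases i <;> simp [uR, wedge, show (-1 : Fin 4) = 3 from rfl] <;> norm_num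

theorem sPlusIter_eq (n : ℕ) (j : Fin 4) : sPlusIter n j = uR (j + n • (1 : Fin 4)) := by
  rw [sPlusIter, Fin.ofNat_eq_nsmul_one]

theorem sMinusIter_eq (n : ℕ) (j : Fin 4) : sMinusIter n j = uR (j + n • (-1 : Fin 4)) := by
  rw [sMinusIter, Fin.ofNat_eq_nsmul_one, smul_neg, sub_eq_add_neg]

/-- Theorem 2, emergence of spin: the average angular momentum
`σ = (1/16) Σ_{n=4q}^{4q+3} Σ_j r^j_n ∧ p^j_n` over one period equals
`m (r̃ ∧ ṽ) − ℏ/2` for `s = s⁺` and `m (r̃ ∧ ṽ) + ℏ/2` for `s = s⁻`,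
where `r̃ = (1/4) Σ_{n=4q}^{4q+3} r̃_n`. -/
theorem emergence_of_spin
    (ℏ m ε : ℝ) (hℏ : 0 < ℏ) (hm : 0 < m) (hε : 0 < ε)
    (q : ℕ) (vt rt0 : EuclideanSpace ℝ (Fin 2))
    (rt : ℕ → EuclideanSpace ℝ (Fin 2))
    (hrt : ∀ n, rt n = rt0 + ((n : ℝ) * ε) • vt)
    (rP rM pP pM : Fin 4 → ℕ → EuclideanSpace ℝ (Fin 2))
    (hrP : ∀ j n, rP j n = rt n + Real.sqrt (ℏ * ε / (4 * m)) • (sPlusIter n j - uR j))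
    (hrM : ∀ j n, rM j n = rt n + Real.sqrt (ℏ * ε / (4 * m)) • (sMinusIter n j - uR j))
    (hpP : ∀ j n, pP j n = (m / ε) • (rP j (n + 1) - rP j n))
    (hpM : ∀ j n, pM j n = (m / ε) • (rM j (n + 1) - rM j n))
    (rbar : EuclideanSpace ℝ (Fin 2))
    (hrbar : rbar = (1 / 4 : ℝ) • ∑ k ∈ Finset.range 4, rt (4 * q + k)) :
    (1 / 16 : ℝ) * ∑ k ∈ Finset.range 4, ∑ j : Fin 4,
        wedge (rP j (4 * q + k)) (pP j (4 * q + k))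
      = m * wedge rbar vt - ℏ / 2
    ∧ (1 / 16 : ℝ) * ∑ k ∈ Finset.range 4, ∑ j : Fin 4,
        wedge (rM j (4 * q + k)) (pM j (4 * q + k))
      = m * wedge rbar vt + ℏ / 2 := by
  have step (n : ℕ) : rt (n + 1) = rt n + ε • vt := by
    rw [hrt, hrt]
    push_cast
    module
  have spin : m / ε * √(ℏ * ε / (4 * m)) ^ 2 = ℏ / 4 := by
    rw [Real.sq_sqrt (by positivity)]
    field_simp
  have hrP' (j : Fin 4) (n : ℕ) := (hrP j n).trans (by rw [sPlusIter_eq])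
  have hrM' (j : Fin 4) (n : ℕ) := (hrM j n).trans (by rw [sMinusIter_eq])
  constructor
  · rw [sum_range_angularMomentum_of_shift uR_wedge_add_one (by decide) hε.ne' step hrP' hpP,
      hrbar, wedge_smul_left, spin]
    simp only [Fintype.card_fin, Nat.cast_ofNat]
    ring
  · rw [sum_range_angularMomentum_of_shift uR_wedge_add_neg_one (by decide) hε.ne' step hrM' hpM,
      hrbar, wedge_smul_left, spin]
    simp only [Fintype.card_fin, Nat.cast_ofNat]
    ring
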